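/- arXiv:2509.11538 — 2 statements merged into one kernel-verified Lean document; each statement's English description precedes it below -/
import Mathlib

section
/- Let n ≥ 1 and let M be an n×n real matrix with nonnegative entries that is irreducible. Suppose p is a row vector with all entries strictly positive and r is a real number with r > -1 such that p = (1+r)·(p·M) (the dynamic production-price equation with uniform profit rate r). Then ρ(M) > 0 and r = 1/ρ(M) - 1. In particular the uniform profit rate r is a strictly decreasing function of the spectral radius ρ(M). -/
/-!
With `ρ = 1 / (1 + r)` the price equation says `p M = ρ p`, so `ρ` is an eigenvalue of `M`.
For any complex eigenvalue `μ` with eigenvector `v`, the triangle inequality and `M ≥ 0` give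
`|μ| |v| ≤ M |v|` entrywise; pairing with `p > 0` yields `|μ| (p ⬝ |v|) ≤ ρ (p ⬝ |v|)`, so
`|μ| ≤ ρ`. Hence `ρ(M) = ρ`.
-/

open Matrix

/-- Spectral radius of a real square matrix: the supremum (here: maximum) of the
absolute values of its complex eigenvalues. -/
noncomputable def specRad {n : ℕ} (M : Matrix (Fin n) (Fin n) ℝ) : ℝ :=
  sSup ((fun z : ℂ => ‖z‖) '' spectrum ℂ (M.map (Complex.ofReal ·)))

/-- A nonnegative matrix is irreducible if for every pair of indices `(i, j)`
there is a positive power `k` with `(M ^ k) i j > 0`. -/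
def MatIrreducible {n : ℕ} (M : Matrix (Fin n) (Fin n) ℝ) : Prop :=
  ∀ i j : Fin n, ∃ k : ℕ, 0 < k ∧ 0 < (M ^ k) i j

namespace Matrix

variable {ι : Type*} [Fintype ι]

theorem mem_spectrum_of_vecMul_eq_smul [DecidableEq ι] {K : Type*} [Field K]
    {A : Matrix ι ι K} {v : ι → K} {μ : K} (hv : v ≠ 0) (h : v ᵥ* A = μ • v) :
    μ ∈ spectrum K A := by
  rw [spectrum.mem_iff, ← vecMul_injective_iff_isUnit]
  refine fun hinj => hv (hinj ?_)
  simp [Algebra.algebraMap_eq_smul_one, vecMul_sub, vecMul_smul, h]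

theorem exists_mulVec_eq_smul_of_mem_spectrum [DecidableEq ι] {K : Type*} [Field K]
    {A : Matrix ι ι K} {μ : K} (h : μ ∈ spectrum K A) : ∃ v ≠ 0, A *ᵥ v = μ • v := by
  rw [← spectrum_toLin', ← Module.End.hasEigenvalue_iff_mem_spectrum] at h
  obtain ⟨v, hv⟩ := h.exists_hasEigenvector
  exact ⟨v, hv.2, hv.apply_eq_smul⟩

theorem le_of_smul_le_mulVec_of_vecMul_eq_smul {R : Type*} [Field R] [LinearOrder R]
    [IsStrictOrderedRing R] {A : Matrix ι ι R} {p w : ι → R} {c ρ : R}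
    (hp : ∀ i, 0 < p i) (hpA : p ᵥ* A = ρ • p) (hw : 0 ≤ w) (hw0 : w ≠ 0)
    (hcw : c • w ≤ A *ᵥ w) : c ≤ ρ := by
  have hpw : 0 < p ⬝ᵥ w := by
    obtain ⟨i, hi⟩ := Function.ne_iff.1 hw0
    exact Finset.sum_pos' (fun j _ => mul_nonneg (hp j).le (hw j))
      ⟨i, Finset.mem_univ i, mul_pos (hp i) ((hw i).lt_of_ne' hi)⟩
  refine le_of_mul_le_mul_right ?_ hpw
  calc c * (p ⬝ᵥ w) = p ⬝ᵥ (c • w) := by rw [dotProduct_smul, smul_eq_mul]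
    _ ≤ p ⬝ᵥ (A *ᵥ w) := dotProduct_le_dotProduct_of_nonneg_left hcw fun i => (hp i).le
    _ = ρ * (p ⬝ᵥ w) := by rw [dotProduct_mulVec, hpA, smul_dotProduct, smul_eq_mul]

theorem norm_smul_le_mulVec_norm {A : Matrix ι ι ℝ} (hA : ∀ i j, 0 ≤ A i j) {v : ι → ℂ} {μ : ℂ}
    (h : A.map (Complex.ofReal ·) *ᵥ v = μ • v) :
    ‖μ‖ • (fun i => ‖v i‖) ≤ A *ᵥ fun i => ‖v i‖ := by
  intro i
  calc ‖μ‖ * ‖v i‖ = ‖∑ j, (A i j : ℂ) * v j‖ := by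
        rw [← norm_mul, ← smul_eq_mul, ← Pi.smul_apply, ← h]; rfl
    _ ≤ ∑ j, ‖(A i j : ℂ) * v j‖ := norm_sum_le _ _
    _ = ∑ j, A i j * ‖v j‖ := by
        simp only [norm_mul, Complex.norm_real, Real.norm_of_nonneg (hA i _)]

theorem norm_le_of_mem_spectrum_of_vecMul_eq_smul [DecidableEq ι] {A : Matrix ι ι ℝ}
    (hA : ∀ i j, 0 ≤ A i j) {p : ι → ℝ} {ρ : ℝ} (hp : ∀ i, 0 < p i) (hpA : p ᵥ* A = ρ • p) {μ : ℂ}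
    (hμ : μ ∈ spectrum ℂ (A.map (Complex.ofReal ·))) : ‖μ‖ ≤ ρ := by
  obtain ⟨v, hv0, hv⟩ := exists_mulVec_eq_smul_of_mem_spectrum hμ
  refine le_of_smul_le_mulVec_of_vecMul_eq_smul hp hpA (fun i => norm_nonneg (v i)) ?_
    (norm_smul_le_mulVec_norm hA hv)
  obtain ⟨i, hi⟩ := Function.ne_iff.1 hv0
  exact Function.ne_iff.2 ⟨i, norm_ne_zero_iff.2 hi⟩

end Matrix

theorem specRad_eq_of_vecMul_eq_smul {n : ℕ} {M : Matrix (Fin n) (Fin n) ℝ}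
    (hM : ∀ i j, 0 ≤ M i j) {p : Fin n → ℝ} (hp : ∀ i, 0 < p i) (hp0 : p ≠ 0) {ρ : ℝ}
    (hpM : p ᵥ* M = ρ • p) : specRad M = ρ := by
  have hρ : (ρ : ℂ) ∈ spectrum ℂ (M.map (Complex.ofReal ·)) := by
    refine mem_spectrum_of_vecMul_eq_smul (v := fun i => (p i : ℂ)) ?_ ?_
    · exact fun h => hp0 (funext fun i => Complex.ofReal_injective (congrFun h i))
    · funext i
      exact (RingHom.map_vecMul Complex.ofRealHom M p i).symm.trans (by simp [hpM])
  have hbound : ∀ μ ∈ spectrum ℂ (M.map (Complex.ofReal ·)), ‖μ‖ ≤ ρ :=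
    fun _ => norm_le_of_mem_spectrum_of_vecMul_eq_smul hM hp hpM
  -- applied to `μ = ρ` itself, the bound shows `ρ ≥ 0`
  have hρ_norm : ‖(ρ : ℂ)‖ = ρ := by
    rw [Complex.norm_real, Real.norm_eq_abs, abs_eq_self]
    exact (abs_nonneg ρ).trans (by simpa using hbound _ hρ)
  refine IsGreatest.csSup_eq ⟨⟨_, hρ, hρ_norm⟩, ?_⟩
  rintro _ ⟨μ, hμ, rfl⟩
  exact hbound μ hμ

theorem stmt_2_general {n : ℕ} (hn : 1 ≤ n) (M : Matrix (Fin n) (Fin n) ℝ)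
    (hM : ∀ i j, 0 ≤ M i j)
    (p : Fin n → ℝ) (hp : ∀ i, 0 < p i) (r : ℝ) (hr : -1 < r)
    (heq : p = (1 + r) • (p ᵥ* M)) :
    0 < specRad M ∧ r = 1 / specRad M - 1 ∧
      StrictAntiOn (fun x : ℝ => 1 / x - 1) (Set.Ioi 0) := by
  have hr₁ : 0 < 1 + r := by linarith
  have hpM : p ᵥ* M = (1 + r)⁻¹ • p := (eq_inv_smul_iff₀ hr₁.ne').2 heq.symm
  have hp0 : p ≠ 0 := fun h => (hp ⟨0, hn⟩).ne' (congrFun h _)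
  have hspec : specRad M = (1 + r)⁻¹ := specRad_eq_of_vecMul_eq_smul hM hp hp0 hpM
  refine ⟨hspec ▸ inv_pos.2 hr₁, by rw [hspec, one_div, inv_inv]; ring, ?_⟩
  exact fun x hx y hy hxy => sub_lt_sub_right (one_div_strictAntiOn hx hy hxy) 1

/-- if a strictly positive price vector `p` satisfies the
dynamic production-price equation `p = (1 + r) • (p ᵥ* M)` with `r > -1`, then
`specRad M > 0` and `r = 1 / specRad M - 1`; in particular the uniform profit
rate is a strictly decreasing function of the spectral radius. -/
theorem stmt_2 {n : ℕ} (hn : 1 ≤ n) (M : Matrix (Fin n) (Fin n) ℝ)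
    (hM : ∀ i j, 0 ≤ M i j) (hirr : MatIrreducible M)
    (p : Fin n → ℝ) (hp : ∀ i, 0 < p i) (r : ℝ) (hr : -1 < r)
    (heq : p = (1 + r) • (p ᵥ* M)) :
    0 < specRad M ∧ r = 1 / specRad M - 1 ∧
      StrictAntiOn (fun x : ℝ => 1 / x - 1) (Set.Ioi 0) :=
  stmt_2_general hn M hM p hp r hr heq
end

section
/- (Derivative of the Perron root with respect to a single entry: ∂λ/∂a_{ij} = v_i·u_j.) Let n ≥ 1 and let M be an n×n real matrix with nonnegative entries that is irreducible, with spectral radius λ = ρ(M). Let u be a column vector with all entries strictly positive satisfying M·u = λ·u, and let v be a column vector with all entries strictly positive satisfying vᵀ·M = λ·vᵀ, normalized so that vᵀ·u = 1. Fix indices i, j and let E^{(ij)} be the matrix whose (i,j) entry is 1 and all other entries are 0. Then there exist ε₀ > 0 and a function μ : (-ε₀, ε₀) → ℝ such that μ(0) = λ, for every ε ∈ (-ε₀, ε₀) the number μ(ε) is a real eigenvalue of M + ε·E^{(ij)}, and μ is differentiable at 0 with derivative μ'(0) = v_i·u_j > 0. -/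
open Matrix

/-!
Implicit function theorem applied to `(ε, μ, w) ↦ ((M + ε E) w - μ w, v ⬝ᵥ w - 1)` at
`(0, λ, u)`. Its partial derivative in `(μ, w)` is `(δμ, δw) ↦ ((M - λ) δw - δμ u, v ⬝ᵥ δw)`,
which is injective because `v ⬝ᵥ u = 1` and `λ` is geometrically simple, the latter by the
Perron–Frobenius argument for the positive eigenvector `u` of the irreducible matrix `M`.
Pairing the differentiated eigen-equation `(M - λ) w' + E u = μ' u` with the left eigenvector
`v` gives `μ'(0) = v ⬝ᵥ E u = v i * u j`.
-/

lemma ContinuousLinearMap.isInvertible_of_injective_of_finrank_eq {E F : Type*}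
    [NormedAddCommGroup E] [NormedSpace ℝ E] [FiniteDimensional ℝ E]
    [NormedAddCommGroup F] [NormedSpace ℝ F] [FiniteDimensional ℝ F]
    {L : E →L[ℝ] F} (hinj : Function.Injective L)
    (hrank : Module.finrank ℝ E = Module.finrank ℝ F) : L.IsInvertible :=
  ⟨(LinearEquiv.ofBijective (L : E →ₗ[ℝ] F)
    ⟨hinj, (LinearMap.injective_iff_surjective_of_finrank_eq_finrank hrank).mp hinj⟩)
    |>.toContinuousLinearEquiv, rfl⟩

namespace Matrix

section Irreducible

variable {ι : Type*} [Fintype ι] [DecidableEq ι] {M : Matrix ι ι ℝ}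

lemma pow_mulVec_of_mulVec_eq_smul {w : ι → ℝ} {c : ℝ} (h : M *ᵥ w = c • w) (k : ℕ) :
    (M ^ k) *ᵥ w = c ^ k • w := by
  induction k with
  | zero => simp
  | succ k ih => rw [pow_succ', ← mulVec_mulVec, ih, mulVec_smul, h, smul_smul, pow_succ]

lemma IsIrreducible.eq_zero_of_nonneg_of_mulVec_eq_smul (hM : M.IsIrreducible) {z : ι → ℝ}
    {c : ℝ} (hz : 0 ≤ z) (hMz : M *ᵥ z = c • z) {q : ι} (hzq : z q = 0) : z = 0 := by
  ext p
  obtain ⟨k, -, hk⟩ := (isIrreducible_iff_exists_pow_pos hM.nonneg).mp hM q p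
  have hsum : ∑ m, (M ^ k) q m * z m = 0 := by
    simpa [mulVec, dotProduct, hzq] using congrFun (pow_mulVec_of_mulVec_eq_smul hMz k) q
  have hterm := (Finset.sum_eq_zero_iff_of_nonneg fun m _ =>
    mul_nonneg (pow_apply_nonneg hM.nonneg k q m) (hz m)).mp hsum p (Finset.mem_univ p)
  simpa [hk.ne'] using hterm

lemma IsIrreducible.exists_eq_smul_of_mulVec_eq_smul (hM : M.IsIrreducible)
    {u : ι → ℝ} (hu : ∀ i, 0 < u i) {c : ℝ} (hMu : M *ᵥ u = c • u) {w : ι → ℝ}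
    (hMw : M *ᵥ w = c • w) : ∃ t : ℝ, w = t • u := by
  cases isEmpty_or_nonempty ι
  · exact ⟨0, Subsingleton.elim _ _⟩
  -- `w - t • u` with `t = min (w / u)` is a nonnegative eigenvector with a zero entry
  obtain ⟨q, hq⟩ := Finite.exists_min fun m => w m / u m
  refine ⟨w q / u q, sub_eq_zero.mp (hM.eq_zero_of_nonneg_of_mulVec_eq_smul (c := c) (q := q)
    (fun m => ?_) ?_ ?_)⟩
  · simpa [sub_nonneg] using (le_div_iff₀ (hu m)).mp (hq m)
  · rw [mulVec_sub, mulVec_smul, hMw, hMu, smul_sub, smul_comm]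
  · simp [div_mul_cancel₀ _ (hu q).ne']

end Irreducible

section Perturbation

variable {ι : Type*} [Fintype ι]

lemma mem_spectrum_of_mulVec_eq_smul [DecidableEq ι] {K : Type*} [Field K] {A : Matrix ι ι K}
    {w : ι → K} {μ : K} (hw : w ≠ 0) (h : A *ᵥ w = μ • w) : μ ∈ spectrum K A :=
  spectrum_toLin' A ▸ (Module.End.hasEigenvalue_of_hasEigenvector
    ⟨Module.End.mem_eigenspace_iff.mpr h, hw⟩).mem_spectrum

variable (M E : Matrix ι ι ℝ) (v : ι → ℝ)

/-- The zeros `(ε, μ, w)` are the eigenpairs `(μ, w)` of `M + ε • E` normalized by `v ⬝ᵥ w = 1`. -/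
def eigenResidual (p : ℝ × ℝ × (ι → ℝ)) : (ι → ℝ) × ℝ :=
  (M *ᵥ p.2.2 + p.1 • (E *ᵥ p.2.2) - p.2.1 • p.2.2, v ⬝ᵥ p.2.2 - 1)

lemma exists_hasStrictFDerivAt_eigenResidual (p : ℝ × ℝ × (ι → ℝ)) :
    ∃ L : ℝ × ℝ × (ι → ℝ) →L[ℝ] (ι → ℝ) × ℝ, HasStrictFDerivAt (eigenResidual M E v) L p ∧
      ∀ δ, L δ = (M *ᵥ δ.2.2 + p.1 • (E *ᵥ δ.2.2) + δ.1 • (E *ᵥ p.2.2)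
        - (p.2.1 • δ.2.2 + δ.2.1 • p.2.2), v ⬝ᵥ δ.2.2) := by
  let mulVecL (A : Matrix ι ι ℝ) : (ι → ℝ) →L[ℝ] ι → ℝ := A.mulVecLin.toContinuousLinearMap
  let dotL : (ι → ℝ) →L[ℝ] ℝ := (dotProductBilin ℝ ℝ v).toContinuousLinearMap
  have hε := hasStrictFDerivAt_fst (𝕜 := ℝ) (p := p)
  have hμ := (hasStrictFDerivAt_snd (𝕜 := ℝ) (p := p)).fst
  have hw := (hasStrictFDerivAt_snd (𝕜 := ℝ) (p := p)).snd
  refine ⟨_, ((((mulVecL M).hasStrictFDerivAt.comp p hw).add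
    (hε.smul ((mulVecL E).hasStrictFDerivAt.comp p hw))).sub (hμ.smul hw)).prodMk
    (((dotL.hasStrictFDerivAt.comp p hw).sub_const 1)), fun δ => ?_⟩
  simp [mulVecL, dotL, add_assoc]

lemma mem_spectrum_of_eigenResidual_eq_zero [DecidableEq ι] {ε μ : ℝ} {w : ι → ℝ}
    (h : eigenResidual M E v (ε, μ, w) = 0) : μ ∈ spectrum ℝ (M + ε • E) := by
  obtain ⟨hMw, hvw⟩ := Prod.ext_iff.mp h
  refine mem_spectrum_of_mulVec_eq_smul (w := w)
    (fun hw => by simp [eigenResidual, hw] at hvw) ?_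
  simpa [eigenResidual, add_mulVec, smul_mulVec, sub_eq_zero] using hMw

variable {M v} {c : ℝ} {u : ι → ℝ}

-- `K` below is the `(μ, w)`-partial derivative of `eigenResidual` at `(0, c, u)`.
lemma fst_eq_neg_dotProduct_of_apply_eq (hvM : v ᵥ* M = c • v) (hvu : v ⬝ᵥ u = 1)
    {K : ℝ × (ι → ℝ) →L[ℝ] (ι → ℝ) × ℝ}
    (hK : ∀ δ, K δ = (M *ᵥ δ.2 - (c • δ.2 + δ.1 • u), v ⬝ᵥ δ.2)) (δ : ℝ × (ι → ℝ)) :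
    δ.1 = -(v ⬝ᵥ (K δ).1) := by
  simp [hK, dotProduct_mulVec, hvM, hvu, dotProduct_sub, dotProduct_add]

lemma isInvertible_of_simple_of_apply_eq (hvM : v ᵥ* M = c • v) (hvu : v ⬝ᵥ u = 1)
    (hsimple : ∀ w, M *ᵥ w = c • w → ∃ t : ℝ, w = t • u)
    {K : ℝ × (ι → ℝ) →L[ℝ] (ι → ℝ) × ℝ}
    (hK : ∀ δ, K δ = (M *ᵥ δ.2 - (c • δ.2 + δ.1 • u), v ⬝ᵥ δ.2)) : K.IsInvertible := by
  refine ContinuousLinearMap.isInvertible_of_injective_of_finrank_eq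
    ((injective_iff_map_eq_zero K).mpr fun ⟨a, w⟩ hδ => ?_) (by simp [add_comm])
  have ha : a = 0 := by simpa [hδ] using fst_eq_neg_dotProduct_of_apply_eq hvM hvu hK (a, w)
  obtain ⟨hMw, hvw⟩ := Prod.ext_iff.mp ((hK _).symm.trans hδ)
  obtain ⟨t, rfl⟩ := hsimple w (by simpa [ha, sub_eq_zero] using hMw)
  simp_all

theorem exists_eigenvalue_hasDerivAt_of_simple [DecidableEq ι] (hMu : M *ᵥ u = c • u)
    (hvM : v ᵥ* M = c • v) (hvu : v ⬝ᵥ u = 1)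
    (hsimple : ∀ w, M *ᵥ w = c • w → ∃ t : ℝ, w = t • u) :
    ∃ ε₀ : ℝ, 0 < ε₀ ∧ ∃ μ : ℝ → ℝ, μ 0 = c ∧
      (∀ ε ∈ Set.Ioo (-ε₀) ε₀, μ ε ∈ spectrum ℝ (M + ε • E)) ∧
      HasDerivAt μ (v ⬝ᵥ (E *ᵥ u)) 0 := by
  obtain ⟨L, hL, hLapp⟩ := exists_hasStrictFDerivAt_eigenResidual M E v (0, c, u)
  have hKapp : ∀ δ, (L ∘L .inr ℝ ℝ _) δ = (M *ᵥ δ.2 - (c • δ.2 + δ.1 • u), v ⬝ᵥ δ.2) :=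
    fun δ => by simp [hLapp]
  have hK := isInvertible_of_simple_of_apply_eq hvM hvu hsimple hKapp
  set ψ := hL.implicitFunctionOfProdDomain hK
  have hzero : eigenResidual M E v (0, c, u) = 0 := by simp [eigenResidual, hMu, hvu]
  have hev : ∀ᶠ ε in nhds 0, eigenResidual M E v (ε, ψ ε) = 0 :=
    hzero ▸ hL.eventually_apply_implicitFunctionOfProdDomain hK
  obtain ⟨ε₀, hε₀, hball⟩ := Metric.eventually_nhds_iff.mp hev
  refine ⟨ε₀, hε₀, fun ε => (ψ ε).1, ?_, fun ε hε => ?_, ?_⟩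
  · exact congrArg Prod.fst
      ((hL.eventually_apply_eq_iff_implicitFunctionOfProdDomain hK).self_of_nhds.mp rfl)
  · exact mem_spectrum_of_eigenResidual_eq_zero M E v
      (hball (by rwa [Real.dist_eq, sub_zero, abs_lt]))
  · have hψ := (hL.hasStrictFDerivAt_implicitFunctionOfProdDomain hK).hasFDerivAt
    refine (hasFDerivAt_fst.comp _ hψ).hasDerivAt.congr_deriv ?_
    have hdir : (L ∘L .inl ℝ ℝ _) 1 = (E *ᵥ u, 0) := by simp [hLapp]
    change (-(L ∘L .inr ℝ ℝ _).inverse ((L ∘L .inl ℝ ℝ _) 1)).1 = _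
    rw [fst_eq_neg_dotProduct_of_apply_eq hvM hvu hKapp, map_neg, hK.self_apply_inverse, hdir]
    simp

end Perturbation

end Matrix

theorem stmt_9_general {n : ℕ} (M : Matrix (Fin n) (Fin n) ℝ)
    (hM : ∀ i j, 0 ≤ M i j) (hirr : MatIrreducible M)
    (u v : Fin n → ℝ) (hu : ∀ i, 0 < u i) (hv : ∀ i, 0 < v i)
    (hMu : M *ᵥ u = specRad M • u) (hvM : v ᵥ* M = specRad M • v)
    (hnorm : v ⬝ᵥ u = 1) (i j : Fin n) :
    ∃ ε₀ : ℝ, 0 < ε₀ ∧ ∃ μ : ℝ → ℝ,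
      μ 0 = specRad M ∧
      (∀ ε ∈ Set.Ioo (-ε₀) ε₀, μ ε ∈ spectrum ℝ (M + ε • Matrix.single i j 1)) ∧
      HasDerivAt μ (v i * u j) 0 ∧ 0 < v i * u j := by
  have hirr' : M.IsIrreducible := (isIrreducible_iff_exists_pow_pos hM).mpr hirr
  have hsimple w := hirr'.exists_eq_smul_of_mulVec_eq_smul hu hMu (w := w)
  obtain ⟨ε₀, hε₀, μ, hμ0, hspec, hderiv⟩ :=
    exists_eigenvalue_hasDerivAt_of_simple (single i j 1) hMu hvM hnorm hsimple
  have hdir : v ⬝ᵥ (single i j 1 *ᵥ u) = v i * u j := by simp [single_mulVec_eq, mul_comm]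
  exact ⟨ε₀, hε₀, μ, hμ0, hspec, hdir ▸ hderiv, mul_pos (hv i) (hu j)⟩

/-- derivative of the Perron root with respect to a single
entry: perturbing the `(i, j)` entry yields a real eigenvalue branch through
`λ = specRad M` with derivative `∂λ/∂a_{ij} = v i * u j > 0` at `0`. -/
theorem stmt_9 {n : ℕ} (hn : 1 ≤ n) (M : Matrix (Fin n) (Fin n) ℝ)
    (hM : ∀ i j, 0 ≤ M i j) (hirr : MatIrreducible M)
    (u v : Fin n → ℝ) (hu : ∀ i, 0 < u i) (hv : ∀ i, 0 < v i)
    (hMu : M *ᵥ u = specRad M • u) (hvM : v ᵥ* M = specRad M • v)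
    (hnorm : v ⬝ᵥ u = 1) (i j : Fin n) :
    ∃ ε₀ : ℝ, 0 < ε₀ ∧ ∃ μ : ℝ → ℝ,
      μ 0 = specRad M ∧
      (∀ ε ∈ Set.Ioo (-ε₀) ε₀, μ ε ∈ spectrum ℝ (M + ε • Matrix.single i j 1)) ∧
      HasDerivAt μ (v i * u j) 0 ∧ 0 < v i * u j :=
  stmt_9_general M hM hirr u v hu hv hMu hvM hnorm i j
end
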